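/- arXiv:math/0501235 — 2 statements merged into one kernel-verified Lean document; each statement's English description precedes it below -/
import Mathlib

section
/- A linear map f on a finite-dimensional real vector space V equipped with a nondegenerate symmetric bilinear form of Lorentz signature (1,n), which preserves the form and restricts to the identity on a codimension-one subspace U on which the form is degenerate (lightlike), is the identity on all of V. -/
/-!
Write `d x := f x - x`. Since `f` is an isometry fixing `U`, every `d x` is orthogonal to `U`.
The form is nondegenerate and `U` is a hyperplane, so `U^⊥` is a line; it contains the lightlike
vector `u` spanning the radical of `U`, hence `f x = x + c • u`. Comparing `B (f x) (f x)` with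
`B x x` and using `B u u = 0` gives `2 c B u x = 0`, so `f x = x` whenever `B u x ≠ 0`. Such `x`
are the complement of a hyperplane, and a linear map fixing them fixes everything.
-/

open Module Submodule

theorem LinearMap.ext_of_forall_apply_ne_zero {K V M : Type*} [Field K] [AddCommGroup V]
    [Module K V] [AddCommGroup M] [Module K M] {φ : V →ₗ[K] K} (hφ : φ ≠ 0)
    {f g : V →ₗ[K] M} (h : ∀ x, φ x ≠ 0 → f x = g x) : f = g := by
  obtain ⟨x₀, hx₀⟩ : ∃ x₀, φ x₀ ≠ 0 := by
    by_contra! h0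
    exact hφ (LinearMap.ext h0)
  ext x
  by_cases hx : φ x = 0
  · have hsum : φ (x + x₀) ≠ 0 := by rwa [map_add, hx, zero_add]
    calc f x = f (x + x₀) - f x₀ := by rw [map_add, add_sub_cancel_right]
      _ = g (x + x₀) - g x₀ := by rw [h _ hsum, h _ hx₀]
      _ = g x := by rw [map_add, add_sub_cancel_right]
  · exact h x hx

namespace LinearMap.BilinForm

variable {K V : Type*} [Field K] [AddCommGroup V] [Module K V] {B : LinearMap.BilinForm K V}

theorem sub_mem_orthogonal_of_isometry {f : V →ₗ[K] V} (hf : ∀ x y, B (f x) (f y) = B x y)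
    {W : Submodule K V} (hfix : ∀ w ∈ W, f w = w) (x : V) : f x - x ∈ B.orthogonal W := by
  intro w hw
  rw [map_sub, ← hf w x, hfix w hw, sub_self]

theorem apply_eq_self_of_isometry_of_sub_mem_span_isotropic [NeZero (2 : K)] (hB : B.IsSymm)
    {f : V →ₗ[K] V} (hf : ∀ x y, B (f x) (f y) = B x y) {u x : V} (hu : B u u = 0)
    (hux : B u x ≠ 0) (hfx : f x - x ∈ K ∙ u) : f x = x := by
  obtain ⟨c, hc⟩ := mem_span_singleton.1 hfx
  have hfx' : f x = x + c • u := by rw [hc, add_sub_cancel]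
  have hquad : c * (2 * B u x) = 0 := by
    have := hf x x
    rw [hfx'] at this
    simp only [map_add, map_smul, LinearMap.add_apply, LinearMap.smul_apply, smul_eq_mul, hu,
      hB.eq x u] at this
    linear_combination this
  have hc0 : c = 0 := (mul_eq_zero.1 hquad).resolve_right (mul_ne_zero two_ne_zero hux)
  rw [hfx', hc0, zero_smul, add_zero]

theorem orthogonal_eq_span_singleton [FiniteDimensional K V] (hB : B.Nondegenerate)
    {W : Submodule K V} (hW : finrank K W + 1 = finrank K V) {u : V} (hu : u ∈ B.orthogonal W)
    (hu0 : u ≠ 0) : B.orthogonal W = K ∙ u :=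
  (eq_of_le_of_finrank_le ((span_singleton_le_iff_mem _ _).2 hu)
    (by rw [finrank_orthogonal hB, finrank_span_singleton hu0]; omega)).symm

end LinearMap.BilinForm

open LinearMap.BilinForm

/-- A linear map preserving a Lorentz form and fixing pointwise a codimension-one
degenerate (lightlike) subspace is the identity. -/
theorem lorentz_fix_lightlike_hyperplane_eq_id
    {n : ℕ} {V : Type*} [AddCommGroup V] [Module ℝ V]
    (B : LinearMap.BilinForm ℝ V)
    (hsymm : ∀ x y : V, B x y = B y x)
    (b : Module.Basis (Fin (n + 1)) ℝ V)
    (hb : ∀ i j, B (b i) (b j) =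
      if i = j then (if (i : ℕ) = 0 then (-1 : ℝ) else 1) else 0)
    (U : Submodule ℝ V)
    (hUdim : Module.finrank ℝ U = n)
    (hdeg : ∃ u ∈ U, u ≠ 0 ∧ ∀ w ∈ U, B u w = 0)
    (f : V →ₗ[ℝ] V)
    (hf : ∀ x y : V, B (f x) (f y) = B x y)
    (hfix : ∀ u ∈ U, f u = u) :
    ∀ x : V, f x = x := by
  have : FiniteDimensional ℝ V := b.finiteDimensional_of_finite
  have hB : B.Nondegenerate := by
    refine (iIsOrtho.nondegenerate_iff_not_isOrtho_basis_self B b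
      (iIsOrtho_def.2 fun i j hij => by rw [hb, if_neg hij])).2 fun i => ?_
    rw [hb, if_pos rfl]
    split_ifs <;> norm_num
  obtain ⟨u, huU, hu0, hurad⟩ := hdeg
  have hu : u ∈ B.orthogonal U := fun w hw => hsymm w u ▸ hurad w hw
  have hline : B.orthogonal U = ℝ ∙ u :=
    orthogonal_eq_span_singleton hB
      (by rw [hUdim, finrank_eq_card_basis b, Fintype.card_fin]) hu hu0
  have hBu : B u ≠ 0 := fun h => hu0 (hB.1 u fun y => by rw [h, LinearMap.zero_apply])
  have hid : f = LinearMap.id := LinearMap.ext_of_forall_apply_ne_zero hBu fun x hx =>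
    apply_eq_self_of_isometry_of_sub_mem_span_isotropic ⟨hsymm⟩ hf (hurad u huU) hx
      (hline ▸ sub_mem_orthogonal_of_isometry hf hfix x)
  exact fun x => LinearMap.congr_fun hid x
end

section
/- On the warped Heisenberg Lie algebra s_λ, the symmetric bilinear form of signature (1,2n+1) in which X_1,...,X_n,Y_1,...,Y_n are orthonormal, Z and W are isotropic and orthogonal to all X_i and Y_i, and <W,Z> = 1, is invariant: <[A,B],C> + <B,[A,C]> = 0 for all A,B,C ∈ s_λ. -/
/-- Coordinates (w, x, y, z) in basis W, X₁,…,Xₙ, Y₁,…,Yₙ, Z of s_λ. -/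
abbrev WarpedHeis (n : ℕ) : Type := ℝ × (Fin n → ℝ) × (Fin n → ℝ) × ℝ

/-- The bracket of s_λ. -/
def warpedBracket {n : ℕ} (lam : Fin n → ℝ) (A B : WarpedHeis n) : WarpedHeis n :=
  (0,
   fun i => -(lam i) * (A.1 * B.2.2.1 i - B.1 * A.2.2.1 i),
   fun i => lam i * (A.1 * B.2.1 i - B.1 * A.2.1 i),
   ∑ i, lam i * (A.2.1 i * B.2.2.1 i - B.2.1 i * A.2.2.1 i))

/-- The Lorentz form: Xᵢ, Yᵢ orthonormal, Z and W isotropic and orthogonal to all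
Xᵢ, Yᵢ, and ⟨W,Z⟩ = 1. -/
def warpedForm {n : ℕ} (A B : WarpedHeis n) : ℝ :=
  (∑ i, A.2.1 i * B.2.1 i) + (∑ i, A.2.2.1 i * B.2.2.1 i) +
    A.1 * B.2.2.2 + A.2.2.2 * B.1

/-- The bilinear form of signature (1,2n+1) on s_λ is invariant:
⟨⁅A,B⁆,C⟩ + ⟨B,⁅A,C⁆⟩ = 0. -/
theorem warpedForm_invariant {n : ℕ} (lam : Fin n → ℝ) :
    ∀ A B C : WarpedHeis n,
      warpedForm (warpedBracket lam A B) C + warpedForm B (warpedBracket lam A C) = 0 := by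
  intro A B C
  simp only [warpedForm, warpedBracket, ← Finset.sum_add_distrib]
  rw [show ∀ s1 c s2 s3 s4 b : ℝ, s1 + 0*c + s2 + (s3 + s4 + b*0) = (s1+s3)+(s2+s4) by intros; ring,
    Finset.sum_mul, Finset.mul_sum, ← Finset.sum_add_distrib, ← Finset.sum_add_distrib, ← Finset.sum_add_distrib]
  apply Finset.sum_eq_zero
  intro i _
  ring
end
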